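/- Let (u, r, v, Λ) be a separable matching model (as in the context) with induced conditional match probabilities σ_c, and let y ∈ ℝ^C be such that (r^c)'(y_c) ≠ 0 for every c ∈ {1,…,C}. Then for every z ∈ ℝ^{d_z}, every pair w^1, w^2 ∈ ℝ^C, and every k ∈ {1,…,d_z}, the 2C-vector whose first C entries are ∂σ_c/∂z_k(z,y,w^1) (c = 1,…,C) and whose last C entries are ∂σ_c/∂z_k(z,y,w^2) (c = 1,…,C) equals the matrix–vector product of Π(z,y,w^1,w^2) with the 2C-vector whose first C entries are ∂u^c/∂z_k(z) / (r^c)'(y_c) and whose last C entries are ∂v^c/∂z_k(z). -/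

import Mathlib

/-- The conditional match probability of college `c` induced by a separable
matching model `(u, r, v, Λ)`. -/
noncomputable def sigmaSep (C dz : ℕ)
    (u v : Fin C → (Fin dz → ℝ) → ℝ) (r : Fin C → ℝ → ℝ)
    (Λ : Fin C → ((Fin C → ℝ) × (Fin C → ℝ)) → ℝ)
    (c : Fin C) (z : Fin dz → ℝ) (y w : Fin C → ℝ) : ℝ :=
  Λ c (fun d => u d z + r d (y d), fun d => v d z + w d)

/-- The `2C × 2C` matrix `Π(z,y,w¹,w²)` of derivatives of the conditional match
probabilities with respect to the excluded variables `(y,w)`, evaluated at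
`(z,y,w¹)` (rows `Sum.inl c`) and at `(z,y,w²)` (rows `Sum.inr c`). -/
noncomputable def PiMat (C dz : ℕ)
    (σ : Fin C → (Fin dz → ℝ) → (Fin C → ℝ) → (Fin C → ℝ) → ℝ)
    (z : Fin dz → ℝ) (y w1 w2 : Fin C → ℝ) :
    Matrix (Fin C ⊕ Fin C) (Fin C ⊕ Fin C) ℝ :=
  Matrix.of fun i j =>
    match i, j with
    | Sum.inl c, Sum.inl d => deriv (fun t => σ c z (Function.update y d t) w1) (y d)
    | Sum.inl c, Sum.inr d => deriv (fun t => σ c z y (Function.update w1 d t)) (w1 d)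
    | Sum.inr c, Sum.inl d => deriv (fun t => σ c z (Function.update y d t) w2) (y d)
    | Sum.inr c, Sum.inr d => deriv (fun t => σ c z y (Function.update w2 d t)) (w2 d)

/-!
By the chain rule, each partial derivative of `σ_c` is `L = DΛ_c`, taken at the index point
`(u(z) + r(y), v(z) + w)`, applied to the velocity of the index vector: `(∂_k u, ∂_k v)` along
`z_k`, `((r^d)'(y_d) e_d, 0)` along `y_d` and `(0, e_d)` along `w_d`. Since `(r^d)'(y_d) ≠ 0`,
the last two families form a basis, and expanding `(∂_k u, ∂_k v)` in it gives row `c` of the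
system.
-/

open Function

theorem map_prod_eq_sum_smul {R M F ι : Type*} [CommSemiring R] [AddCommMonoid M]
    [Module R M] [FunLike F ((ι → R) × (ι → R)) M] [LinearMapClass F R ((ι → R) × (ι → R)) M]
    [Fintype ι] [DecidableEq ι] (L : F) (a b : ι → R) :
    L (a, b) = ∑ i, a i • L (Pi.single i 1, 0) + ∑ i, b i • L (0, Pi.single i 1) := by
  have hab : ((a, b) : (ι → R) × (ι → R)) =
      ∑ i, a i • ((Pi.single i 1, 0) : (ι → R) × (ι → R)) + ∑ i, b i • (0, Pi.single i 1) := by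
    ext j <;> simp [Prod.fst_sum, Prod.snd_sum, Finset.sum_apply, Pi.single_apply]
  conv_lhs => rw [hab]
  simp only [map_add, map_sum, map_smul]

section Pi

variable {𝕜 ι : Type*} [NontriviallyNormedField 𝕜] [DecidableEq ι]

theorem differentiableAt_comp_update [Fintype ι] {E : Type*} [NormedAddCommGroup E]
    [NormedSpace 𝕜 E] {f : (ι → 𝕜) → E} {x : ι → 𝕜} (hf : DifferentiableAt 𝕜 f x) (i : ι) :
    DifferentiableAt 𝕜 (fun t => f (update x i t)) (x i) :=
  (hf.hasFDerivAt.comp_hasDerivAt_of_eq (x i) (hasDerivAt_update x i (x i))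
    (update_eq_self i x).symm).differentiableAt

theorem hasDerivAt_pi_comp_update (φ : ι → 𝕜 → 𝕜) (x : ι → 𝕜) (i : ι)
    (hφ : DifferentiableAt 𝕜 (φ i) (x i)) :
    HasDerivAt (fun t j => φ j (update x i t j)) (Pi.single i (deriv (φ i) (x i))) (x i) := by
  refine hasDerivAt_pi.2 fun j => ?_
  rcases eq_or_ne j i with rfl | hji
  · simpa using hφ.hasDerivAt
  · simpa [update_of_ne hji, Pi.single_eq_of_ne hji] using hasDerivAt_const (x i) (φ j (x j))

end Pi

section SeparableModel

variable {C dz : ℕ} (u v : Fin C → (Fin dz → ℝ) → ℝ) (r : Fin C → ℝ → ℝ)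
  (Λ : Fin C → ((Fin C → ℝ) × (Fin C → ℝ)) → ℝ)

def sepIndex (z : Fin dz → ℝ) (y w : Fin C → ℝ) : (Fin C → ℝ) × (Fin C → ℝ) :=
  (fun d => u d z + r d (y d), fun d => v d z + w d)

variable {u v r Λ} (c : Fin C) {z : Fin dz → ℝ} {y w : Fin C → ℝ}
  (hΛ : DifferentiableAt ℝ (Λ c) (sepIndex u v r z y w))
include hΛ

theorem deriv_sigmaSep_update_z (hu : ∀ d, DifferentiableAt ℝ (u d) z)
    (hv : ∀ d, DifferentiableAt ℝ (v d) z) (k : Fin dz) :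
    deriv (fun t => sigmaSep C dz u v r Λ c (update z k t) y w) (z k) =
      fderiv ℝ (Λ c) (sepIndex u v r z y w)
        (fun d => deriv (fun s => u d (update z k s)) (z k),
          fun d => deriv (fun s => v d (update z k s)) (z k)) := by
  have hpath : HasDerivAt (fun t => sepIndex u v r (update z k t) y w)
      (fun d => deriv (fun s => u d (update z k s)) (z k),
        fun d => deriv (fun s => v d (update z k s)) (z k)) (z k) :=
    (hasDerivAt_pi.2 fun d => (differentiableAt_comp_update (hu d) k).hasDerivAt.add_const _).prodMk
      (hasDerivAt_pi.2 fun d => (differentiableAt_comp_update (hv d) k).hasDerivAt.add_const _)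
  exact (hΛ.hasFDerivAt.comp_hasDerivAt_of_eq (z k) hpath (by rw [update_eq_self])).deriv

theorem deriv_sigmaSep_update_y (hr : ∀ d, DifferentiableAt ℝ (r d) (y d)) (d : Fin C) :
    deriv (fun t => sigmaSep C dz u v r Λ c z (update y d t) w) (y d) =
      fderiv ℝ (Λ c) (sepIndex u v r z y w) (Pi.single d (deriv (r d) (y d)), 0) := by
  have hpath : HasDerivAt (fun t => sepIndex u v r z (update y d t) w)
      (Pi.single d (deriv (r d) (y d)), 0) (y d) := by
    have h := hasDerivAt_pi_comp_update (fun j s => u j z + r j s) y d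
      ((hr d).const_add _)
    rw [deriv_const_add] at h
    exact h.prodMk (hasDerivAt_const _ _)
  exact (hΛ.hasFDerivAt.comp_hasDerivAt_of_eq (y d) hpath (by rw [update_eq_self])).deriv

theorem deriv_sigmaSep_update_w (d : Fin C) :
    deriv (fun t => sigmaSep C dz u v r Λ c z y (update w d t)) (w d) =
      fderiv ℝ (Λ c) (sepIndex u v r z y w) (0, Pi.single d 1) := by
  have hpath : HasDerivAt (fun t => sepIndex u v r z y (update w d t))
      (0, Pi.single d 1) (w d) := by
    have h := hasDerivAt_pi_comp_update (fun j s => v j z + s) w d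
      (differentiableAt_id.const_add _)
    rw [deriv_const_add, deriv_id''] at h
    exact (hasDerivAt_const _ _).prodMk h
  exact (hΛ.hasFDerivAt.comp_hasDerivAt_of_eq (w d) hpath (by rw [update_eq_self])).deriv

theorem deriv_sigmaSep_update_z_eq_sum (hu : ∀ d, DifferentiableAt ℝ (u d) z)
    (hv : ∀ d, DifferentiableAt ℝ (v d) z) (hr : ∀ d, DifferentiableAt ℝ (r d) (y d))
    (hy : ∀ d, deriv (r d) (y d) ≠ 0) (k : Fin dz) :
    deriv (fun t => sigmaSep C dz u v r Λ c (update z k t) y w) (z k) =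
      (∑ d, deriv (fun t => sigmaSep C dz u v r Λ c z (update y d t) w) (y d) *
          (deriv (fun s => u d (update z k s)) (z k) / deriv (r d) (y d))) +
        ∑ d, deriv (fun t => sigmaSep C dz u v r Λ c z y (update w d t)) (w d) *
          deriv (fun s => v d (update z k s)) (z k) := by
  simp only [deriv_sigmaSep_update_z c hΛ hu hv, deriv_sigmaSep_update_y c hΛ hr,
    deriv_sigmaSep_update_w c hΛ]
  rw [map_prod_eq_sum_smul]
  simp only [smul_eq_mul]
  congr 1 <;> refine Finset.sum_congr rfl fun d _ => ?_
  · have hsingle : ((Pi.single d (deriv (r d) (y d)), 0) : (Fin C → ℝ) × (Fin C → ℝ)) =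
        deriv (r d) (y d) • (Pi.single d 1, 0) := by
      simp [← Pi.single_smul]
    rw [hsingle, map_smul, smul_eq_mul]
    field_simp [hy d]
  · ring

end SeparableModel

theorem stmt_1_general (C dz : ℕ)
    (u v : Fin C → (Fin dz → ℝ) → ℝ)
    (r : Fin C → ℝ → ℝ)
    (Λ : Fin C → ((Fin C → ℝ) × (Fin C → ℝ)) → ℝ)
    (hu : ∀ c, ContDiff ℝ 1 (u c)) (hv : ∀ c, ContDiff ℝ 1 (v c))
    (hr : ∀ c, ContDiff ℝ 1 (r c)) (hΛ : ∀ c, ContDiff ℝ 1 (Λ c))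
    (y : Fin C → ℝ) (hy : ∀ c, deriv (r c) (y c) ≠ 0) :
    ∀ (z : Fin dz → ℝ) (w1 w2 : Fin C → ℝ) (k : Fin dz),
      (Sum.elim
        (fun c => deriv
          (fun t => sigmaSep C dz u v r Λ c (Function.update z k t) y w1) (z k))
        (fun c => deriv
          (fun t => sigmaSep C dz u v r Λ c (Function.update z k t) y w2) (z k))) =
      (PiMat C dz (sigmaSep C dz u v r Λ) z y w1 w2).mulVec
        (Sum.elim
          (fun c => deriv (fun s => u c (Function.update z k s)) (z k) /
            deriv (r c) (y c))
          (fun c => deriv (fun s => v c (Function.update z k s)) (z k))) := by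
  intro z w1 w2 k
  ext (c | c) <;>
    simp only [Matrix.mulVec, dotProduct, Fintype.sum_sum_type, PiMat, Matrix.of_apply,
      Sum.elim_inl, Sum.elim_inr] <;>
    exact deriv_sigmaSep_update_z_eq_sum c (((hΛ c).differentiable one_ne_zero) _)
      (fun d => (hu d).differentiable one_ne_zero z) (fun d => (hv d).differentiable one_ne_zero z)
      (fun d => (hr d).differentiable one_ne_zero (y d)) hy k

/-- equation (7)/(A.4): the key linear system. The stacked vector
of partial derivatives `∂σ_c/∂z_k` at `(z,y,w¹)` and `(z,y,w²)` equals
`Π(z,y,w¹,w²)` multiplied by the vector whose first `C` entries are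
`∂u^c/∂z_k(z) / (r^c)'(y_c)` and whose last `C` entries are `∂v^c/∂z_k(z)`. -/
theorem stmt_1 (C dz : ℕ) (hC : 1 ≤ C) (hdz : 1 ≤ dz)
    (u v : Fin C → (Fin dz → ℝ) → ℝ)
    (r : Fin C → ℝ → ℝ)
    (Λ : Fin C → ((Fin C → ℝ) × (Fin C → ℝ)) → ℝ)
    (hu : ∀ c, ContDiff ℝ 1 (u c)) (hv : ∀ c, ContDiff ℝ 1 (v c))
    (hr : ∀ c, ContDiff ℝ 1 (r c)) (hΛ : ∀ c, ContDiff ℝ 1 (Λ c))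
    (y : Fin C → ℝ) (hy : ∀ c, deriv (r c) (y c) ≠ 0) :
    ∀ (z : Fin dz → ℝ) (w1 w2 : Fin C → ℝ) (k : Fin dz),
      (Sum.elim
        (fun c => deriv
          (fun t => sigmaSep C dz u v r Λ c (Function.update z k t) y w1) (z k))
        (fun c => deriv
          (fun t => sigmaSep C dz u v r Λ c (Function.update z k t) y w2) (z k))) =
      (PiMat C dz (sigmaSep C dz u v r Λ) z y w1 w2).mulVec
        (Sum.elim
          (fun c => deriv (fun s => u c (Function.update z k s)) (z k) /
            deriv (r c) (y c))
          (fun c => deriv (fun s => v c (Function.update z k s)) (z k))) :=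
  stmt_1_general C dz u v r Λ hu hv hr hΛ y hy
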